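/- Let φ : ℕ → Option ℕ and let w : ℕ → ℂ be bounded. Then T_{w,φ} : ℓ¹ → ℓ¹ is bijective (equivalently, by the open mapping theorem, an isomorphism of ℓ¹) if and only if all of the following hold: φ is injective; φ(i) ≠ none for every i ∈ ℕ; for every j ∈ ℕ there exists i ∈ ℕ with φ(i) = some j; w(i) ≠ 0 for every i ∈ ℕ; and inf_i |w(i)| > 0. -/

import Mathlib

/-!
On unit vectors `T eᵢ = wᵢ e_{φ i}`, or `0` when `φ i = none`. Injectivity of `T` therefore forces
`φ` to be total and injective with non-vanishing weights (otherwise `T` kills some `eᵢ`, or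
identifies `w_{i₂} e_{i₁}` with `w_{i₁} e_{i₂}`), surjectivity forces every index to be hit, and
the open mapping theorem gives `1 = ‖eᵢ‖ ≤ C ‖T eᵢ‖ = C ‖wᵢ‖`. Conversely, under these conditions
`(T a)(φ i) = wᵢ aᵢ`, which is inverted by `b ↦ (b_{φ i} / wᵢ)ᵢ`; this lies in `ℓᵖ` because
`‖wᵢ‖⁻¹` is bounded and reindexing along an injection preserves `ℓᵖ`.
-/

open scoped ENNReal

theorem Memℓp.comp_injective {α β : Type*} {E : Type*} [NormedAddCommGroup E] {p : ℝ≥0∞}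
    {f : α → E} (hf : Memℓp f p) {ψ : β → α} (hψ : Function.Injective ψ) :
    Memℓp (f ∘ ψ) p := by
  obtain (rfl | rfl | hp) := p.trichotomy
  · exact memℓp_zero ((memℓp_zero_iff.1 hf).preimage hψ.injOn)
  · exact memℓp_infty (hf.bddAbove.mono (Set.range_comp_subset_range ψ (‖f ·‖)))
  · exact (memℓp_gen_iff hp).2 ((hf.summable hp).comp_injective hψ)

theorem lp.single_ne_zero {ι E : Type*} [DecidableEq ι] [NormedAddCommGroup E] (p : ℝ≥0∞)
    (i : ι) {c : E} (hc : c ≠ 0) : (lp.single p i c : lp (fun _ : ι => E) p) ≠ 0 := fun h =>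
  hc (by simpa using congr($h i))

variable {ι 𝕜 : Type*} [NontriviallyNormedField 𝕜] {p : ℝ≥0∞} [Fact (1 ≤ p)]

def IsWeightedCompositionOperator (φ : ι → Option ι) (w : ι → 𝕜)
    (T : lp (fun _ : ι => 𝕜) p →L[𝕜] lp (fun _ : ι => 𝕜) p) : Prop :=
  ∀ (a : lp (fun _ : ι => 𝕜) p) (j : ι), T a j = ∑' i : {i : ι // φ i = some j}, w i * a i

namespace IsWeightedCompositionOperator

variable {φ : ι → Option ι} {w : ι → 𝕜} {T : lp (fun _ : ι => 𝕜) p →L[𝕜] lp (fun _ : ι => 𝕜) p}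
  (hT : IsWeightedCompositionOperator φ w T)
include hT

theorem apply_eq_zero_of_forall_ne {j : ι} (h : ∀ i, φ i ≠ some j) (a : lp (fun _ : ι => 𝕜) p) :
    T a j = 0 := by
  have : IsEmpty {i : ι // φ i = some j} := ⟨fun i => h i i.2⟩
  rw [hT, tsum_empty]

theorem apply_of_injective (hφ : Function.Injective φ) {i j : ι} (h : φ i = some j)
    (a : lp (fun _ : ι => 𝕜) p) : T a j = w i * a i := by
  rw [hT]
  exact tsum_eq_single (⟨i, h⟩ : {i // φ i = some j}) fun i' hi' =>
    absurd (Subtype.ext (hφ (i'.2.trans h.symm))) hi'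

theorem injective (hφ : Function.Injective φ) (hnone : ∀ i, φ i ≠ none) (hw : ∀ i, w i ≠ 0) :
    Function.Injective T := by
  refine (injective_iff_map_eq_zero T).2 fun a ha => ?_
  ext i
  obtain ⟨j, hj⟩ := Option.ne_none_iff_exists'.1 (hnone i)
  have := hT.apply_of_injective hφ hj a
  simp only [ha, lp.coeFn_zero, Pi.zero_apply, zero_eq_mul] at this
  simpa using this.resolve_left (hw i)

theorem surjective (hφ : Function.Injective φ) (hnone : ∀ i, φ i ≠ none)
    (hsurj : ∀ j, ∃ i, φ i = some j) {c : ℝ} (hc : 0 < c) (hwc : ∀ i, c ≤ ‖w i‖) :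
    Function.Surjective T := by
  choose ψ hψ using fun i => Option.ne_none_iff_exists'.1 (hnone i)
  have hψinj : Function.Injective ψ := fun i₁ i₂ h => hφ (by rw [hψ, hψ, h])
  intro b
  have hmem : Memℓp (fun i => (w i)⁻¹ * b (ψ i)) p := by
    refine (((lp.memℓp b).comp_injective hψinj).norm.const_mul c⁻¹).mono fun i => ?_
    rw [norm_mul, norm_inv]
    exact mul_le_mul_of_nonneg_right (inv_anti₀ hc (hwc i)) (norm_nonneg _)
  refine ⟨⟨_, hmem⟩, lp.ext (funext fun j => ?_)⟩
  obtain ⟨i, rfl⟩ : ∃ i, ψ i = j := by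
    obtain ⟨i, hi⟩ := hsurj j
    exact ⟨i, Option.some_injective _ ((hψ i).symm.trans hi)⟩
  rw [hT.apply_of_injective hφ (hψ i)]
  exact mul_inv_cancel_left₀ (norm_pos_iff.1 (hc.trans_le (hwc i))) _

variable [DecidableEq ι]

theorem apply_single_apply (i : ι) (c : 𝕜) (j : ι) :
    T (lp.single p i c) j = if φ i = some j then w i * c else 0 := by
  rw [hT]
  split_ifs with h
  · refine (tsum_eq_single (⟨i, h⟩ : {i // φ i = some j}) fun i' hi' => ?_).trans (by simp)
    simp [Subtype.coe_ne_coe.2 hi']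
  · refine (tsum_congr fun i' => ?_).trans tsum_zero
    have : (i' : ι) ≠ i := fun e => h (e ▸ i'.2)
    simp [this]

theorem apply_single_eq_zero {i : ι} (h : φ i = none ∨ w i = 0) (c : 𝕜) :
    T (lp.single p i c) = 0 := by
  ext j
  rcases h with h | h <;> simp [hT.apply_single_apply, h]

theorem apply_single_of_eq_some {i j : ι} (h : φ i = some j) (c : 𝕜) :
    T (lp.single p i c) = lp.single p j (w i * c) := by
  ext k
  by_cases hk : k = j
  · simp [hT.apply_single_apply, h, hk]
  · simp [hT.apply_single_apply, h, hk, Ne.symm hk]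

theorem ne_none_and_ne_zero_of_injective (hinj : Function.Injective T) (i : ι) :
    φ i ≠ none ∧ w i ≠ 0 :=
  not_or.1 fun h =>
    lp.single_ne_zero p i one_ne_zero (hinj ((hT.apply_single_eq_zero h 1).trans (map_zero T).symm))

theorem injective_of_injective (hinj : Function.Injective T) : Function.Injective φ := by
  intro i₁ i₂ h
  obtain ⟨j, hj⟩ := Option.ne_none_iff_exists'.1 (hT.ne_none_and_ne_zero_of_injective hinj i₁).1
  have hsingle : lp.single p i₁ (w i₂) = lp.single p i₂ (w i₁) := hinj <| by
    rw [hT.apply_single_of_eq_some hj, hT.apply_single_of_eq_some (h ▸ hj), mul_comm]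
  by_contra hne
  have := congr($hsingle i₁)
  simp [Ne.symm hne, (hT.ne_none_and_ne_zero_of_injective hinj i₂).2] at this

theorem exists_eq_some_of_surjective (hsurj : Function.Surjective T) (j : ι) :
    ∃ i, φ i = some j := by
  by_contra! h
  obtain ⟨a, ha⟩ := hsurj (lp.single p j 1)
  simpa [ha] using hT.apply_eq_zero_of_forall_ne h a

theorem exists_pos_le_norm_of_bijective [CompleteSpace 𝕜] (hbij : Function.Bijective T) :
    ∃ c > 0, ∀ i, c ≤ ‖w i‖ := by
  obtain ⟨C, hC, hpre⟩ := T.exists_preimage_norm_le hbij.2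
  refine ⟨C⁻¹, inv_pos.2 hC, fun i => ?_⟩
  obtain ⟨j, hj⟩ := Option.ne_none_iff_exists'.1 (hT.ne_none_and_ne_zero_of_injective hbij.1 i).1
  obtain ⟨x, hx, hxC⟩ := hpre (T (lp.single p i 1))
  rw [hbij.1 hx, hT.apply_single_of_eq_some hj] at hxC
  have hp : 0 < p := zero_lt_one.trans_le Fact.out
  rw [lp.norm_single hp, lp.norm_single hp, norm_one, mul_one] at hxC
  rwa [inv_le_iff_one_le_mul₀' hC]

end IsWeightedCompositionOperator

theorem stmt13_general (φ : ℕ → Option ℕ) (w : ℕ → ℂ)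
    (T : lp (fun _ : ℕ => ℂ) 1 →L[ℂ] lp (fun _ : ℕ => ℂ) 1)
    (hT : ∀ (a : lp (fun _ : ℕ => ℂ) 1) (j : ℕ),
      T a j = ∑' i : {i : ℕ // φ i = some j}, w i * a i) :
    Function.Bijective T ↔
      (Function.Injective φ ∧ (∀ i : ℕ, φ i ≠ none) ∧ (∀ j : ℕ, ∃ i : ℕ, φ i = some j) ∧
        (∀ i : ℕ, w i ≠ 0) ∧ 0 < ⨅ i : ℕ, ‖w i‖) := by
  have hT : IsWeightedCompositionOperator φ w T := hT
  constructor
  · intro hbij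
    have hnz := hT.ne_none_and_ne_zero_of_injective hbij.1
    obtain ⟨c, hc, hwc⟩ := hT.exists_pos_le_norm_of_bijective hbij
    exact ⟨hT.injective_of_injective hbij.1, fun i => (hnz i).1,
      hT.exists_eq_some_of_surjective hbij.2, fun i => (hnz i).2, hc.trans_le (le_ciInf hwc)⟩
  · rintro ⟨hφ, hnone, hsurj, hw, hinf⟩
    have hbdd : BddBelow (Set.range fun i => ‖w i‖) := ⟨0, by rintro _ ⟨i, rfl⟩; positivity⟩
    exact ⟨hT.injective hφ hnone hw, hT.surjective hφ hnone hsurj hinf (ciInf_le hbdd)⟩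

/-- Let `T` be the weighted shift-type operator on `ℓ¹` determined by `φ : ℕ → Option ℕ` and a
bounded weight `w` (i.e. `(T a)(j) = Σ_{i : φ(i) = some j} w(i)·a(i)`). Then `T` is bijective
(equivalently, an isomorphism of `ℓ¹`) iff `φ` is injective, `φ(i) ≠ none` for every `i`,
every `j` is attained as `φ(i) = some j`, `w` never vanishes, and `inf_i |w(i)| > 0`. -/
theorem stmt13 (φ : ℕ → Option ℕ) (w : ℕ → ℂ) (hw : ∃ C : ℝ, ∀ i, ‖w i‖ ≤ C)
    (T : lp (fun _ : ℕ => ℂ) 1 →L[ℂ] lp (fun _ : ℕ => ℂ) 1)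
    (hT : ∀ (a : lp (fun _ : ℕ => ℂ) 1) (j : ℕ),
      T a j = ∑' i : {i : ℕ // φ i = some j}, w i * a i) :
    Function.Bijective T ↔
      (Function.Injective φ ∧ (∀ i : ℕ, φ i ≠ none) ∧ (∀ j : ℕ, ∃ i : ℕ, φ i = some j) ∧
        (∀ i : ℕ, w i ≠ 0) ∧ 0 < ⨅ i : ℕ, ‖w i‖) :=
  stmt13_general φ w T hT
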